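/- Let X be a nonnegative random variable with finite mean whose distribution has an exponential tail with parameters (c, λ), i.e., lim_{x→∞} P(X > x)/(c·exp(−λx)) = 1, where c > 0 and λ > 0. Let X_{(n:n)} denote the maximum of n i.i.d. copies of X. Then lim_{n→∞} E[X_{(n:n)}] / (ln n / λ) = 1. -/

import Mathlib

open MeasureTheory ProbabilityTheory Filter Topology

/-!
Write `M n` for the maximum of `X 0, …, X (n - 1)` and `ℓ n = log n / λ`.
Upper bound: for every level `a ≥ 0`, `M n ≤ a + ∑ (X i - a)⁺`, and the exponential tail gives
`E (X - a)⁺ = ∫_a^∞ P(X > x) dx = O(e^{-λa})`; at `a = s ℓ n` with `s > 1` the error term is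
`O(n^{1-s}) = o(ℓ n)`.
Lower bound: by Markov, `E (M n) ≥ b P(M n ≥ b) ≥ b (1 - (1 - P(X > b))ⁿ)`; at `b = s ℓ n` with
`s < 1` we have `n P(X > b) ≳ n^{1-s} → ∞`, so `(1 - P(X > b))ⁿ ≤ exp (-n P(X > b)) → 0`.
-/

lemma eventually_half_le_and_le_two_mul_of_tendsto_div {α : Type*} {l : Filter α} {f g : α → ℝ}
    (hg : ∀ᶠ x in l, 0 < g x) (h : Tendsto (fun x => f x / g x) l (𝓝 1)) :
    ∀ᶠ x in l, g x / 2 ≤ f x ∧ f x ≤ 2 * g x := by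
  filter_upwards [h (Ioo_mem_nhds (by norm_num : (1 / 2 : ℝ) < 1) one_lt_two), hg] with x hx hgx
  rw [Set.mem_preimage, Set.mem_Ioo, lt_div_iff₀ hgx, div_lt_iff₀ hgx] at hx
  constructor <;> linarith [hx.1, hx.2]

lemma mul_exp_neg_mul_mul_log_div_eq_rpow {x : ℝ} (hx : 0 < x) {lam : ℝ} (hlam : lam ≠ 0)
    (s : ℝ) : x * Real.exp (-lam * (s * Real.log x / lam)) = x ^ (1 - s) := by
  have hexp : -lam * (s * Real.log x / lam) = -(Real.log x * s) := by field_simp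
  rw [hexp, Real.exp_neg, Real.rpow_sub hx, Real.rpow_one, Real.rpow_def_of_pos hx, div_eq_mul_inv]

lemma iSup_le_add_sum_max_sub {n : ℕ} (f : Fin n → ℝ) {a : ℝ} (ha : 0 ≤ a) :
    ⨆ i, f i ≤ a + ∑ i, max (f i - a) 0 := by
  have hsum : 0 ≤ ∑ i, max (f i - a) 0 := Finset.sum_nonneg fun i _ => le_max_right _ _
  refine Real.iSup_le (fun i => ?_) (by linarith)
  calc f i ≤ a + max (f i - a) 0 := by linarith [le_max_left (f i - a) 0]
    _ ≤ a + ∑ j, max (f j - a) 0 := by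
      gcongr
      exact Finset.single_le_sum (f := fun j => max (f j - a) 0)
        (fun j _ => le_max_right _ _) (Finset.mem_univ i)

section

variable {Ω : Type*} [MeasurableSpace Ω] {μ : Measure Ω} {X : ℕ → Ω → ℝ}

lemma integrable_iSup_fin_of_nonneg (hmeas : ∀ i, Measurable (X i))
    (hnonneg : ∀ i ω, 0 ≤ X i ω) (hint : ∀ i, Integrable (X i) μ) (n : ℕ) :
    Integrable (fun ω => ⨆ i : Fin n, X i ω) μ := by
  refine (integrable_finsetSum Finset.univ fun (i : Fin n) _ => hint i).mono'
    (Measurable.iSup fun i : Fin n => hmeas i).aestronglyMeasurable (ae_of_all _ fun ω => ?_)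
  rw [Real.norm_of_nonneg (Real.iSup_nonneg fun i : Fin n => hnonneg i ω)]
  exact Real.iSup_le (fun i => Finset.single_le_sum (f := fun j : Fin n => X j ω)
    (fun j _ => hnonneg j ω) (Finset.mem_univ i)) (Finset.sum_nonneg fun j _ => hnonneg j ω)

lemma integral_max_sub_le_of_tail_le [IsFiniteMeasure μ] {Y : Ω → ℝ} (hY : Integrable Y μ)
    {C lam a : ℝ} (hlam : 0 < lam)
    (htail : ∀ x ≥ a, μ.real {ω | x < Y ω} ≤ C * Real.exp (-lam * x)) :
    ∫ ω, max (Y ω - a) 0 ∂μ ≤ C / lam * Real.exp (-lam * a) := by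
  have hbound : ∀ t ∈ Set.Ioi (0 : ℝ), μ.real {ω | t < max (Y ω - a) 0}
      ≤ C * Real.exp (-lam * a) * Real.exp (-lam * t) := by
    intro t (ht : 0 < t)
    have hset : {ω | t < max (Y ω - a) 0} = {ω | a + t < Y ω} := by
      ext ω
      simp only [Set.mem_ofPred_eq, lt_max_iff]
      constructor
      · rintro (h | h) <;> linarith
      · intro h; left; linarith
    rw [hset, mul_assoc, ← Real.exp_add, show -lam * a + -lam * t = -lam * (a + t) by ring]
    exact htail _ (by linarith)
  have hint : Integrable (fun ω => max (Y ω - a) 0) μ := (hY.sub (integrable_const a)).pos_part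
  rw [hint.integral_eq_integral_meas_lt (ae_of_all _ fun ω => le_max_right _ _)]
  calc ∫ t in Set.Ioi 0, μ.real {ω | t < max (Y ω - a) 0}
      ≤ ∫ t in Set.Ioi 0, C * Real.exp (-lam * a) * Real.exp (-lam * t) :=
        integral_mono_of_nonneg (ae_of_all _ fun _ => measureReal_nonneg)
          ((exp_neg_integrableOn_Ioi 0 hlam).const_mul _)
          ((ae_restrict_iff' measurableSet_Ioi).2 (ae_of_all _ hbound))
    _ = C / lam * Real.exp (-lam * a) := by
        rw [integral_const_mul, integral_exp_mul_Ioi (neg_lt_zero.2 hlam)]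
        field_simp
        simp

lemma integral_iSup_fin_le_add_mul [IsProbabilityMeasure μ]
    (hident : ∀ i, IdentDistrib (X i) (X 0) μ μ) (hint : Integrable (X 0) μ) {n : ℕ}
    (hsup : Integrable (fun ω => ⨆ i : Fin n, X i ω) μ) {a : ℝ} (ha : 0 ≤ a) :
    ∫ ω, ⨆ i : Fin n, X i ω ∂μ ≤ a + n * ∫ ω, max (X 0 ω - a) 0 ∂μ := by
  have hterm : ∀ i, Integrable (fun ω => max (X i ω - a) 0) μ := fun i =>
    (((hident i).integrable_iff.2 hint).sub (integrable_const a)).pos_part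
  have hsame : ∀ i, ∫ ω, max (X i ω - a) 0 ∂μ = ∫ ω, max (X 0 ω - a) 0 ∂μ := fun i =>
    ((hident i).comp ((measurable_id.sub_const a).max measurable_const)).integral_eq
  have hsum : Integrable (fun ω => ∑ i : Fin n, max (X i ω - a) 0) μ :=
    integrable_finsetSum _ fun i _ => hterm i
  calc ∫ ω, ⨆ i : Fin n, X i ω ∂μ
      ≤ ∫ ω, a + ∑ i : Fin n, max (X i ω - a) 0 ∂μ :=
        integral_mono hsup ((integrable_const a).add hsum)
          fun ω => iSup_le_add_sum_max_sub (fun i : Fin n => X i ω) ha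
    _ = a + n * ∫ ω, max (X 0 ω - a) 0 ∂μ := by
        rw [integral_add (integrable_const a) hsum,
          integral_finsetSum _ fun (i : Fin n) _ => hterm i]
        simp [hsame]

lemma measure_iInter_le_eq_pow (hindep : iIndepFun X μ)
    (hident : ∀ i, IdentDistrib (X i) (X 0) μ μ) (n : ℕ) (b : ℝ) :
    μ (⋂ i ∈ Finset.range n, X i ⁻¹' Set.Iic b) = μ (X 0 ⁻¹' Set.Iic b) ^ n := by
  rw [hindep.meas_biInter fun i _ => ⟨Set.Iic b, measurableSet_Iic, rfl⟩,
    Finset.prod_congr rfl fun i _ => (hident i).measure_mem_eq measurableSet_Iic,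
    Finset.prod_const, Finset.card_range]

lemma mul_one_sub_pow_le_integral_iSup_fin [IsProbabilityMeasure μ]
    (hmeas : ∀ i, Measurable (X i)) (hnonneg : ∀ i ω, 0 ≤ X i ω) (hindep : iIndepFun X μ)
    (hident : ∀ i, IdentDistrib (X i) (X 0) μ μ) {n : ℕ}
    (hsup : Integrable (fun ω => ⨆ i : Fin n, X i ω) μ) {b : ℝ} (hb : 0 ≤ b) :
    b * (1 - (1 - μ.real {ω | b < X 0 ω}) ^ n) ≤ ∫ ω, ⨆ i : Fin n, X i ω ∂μ := by
  set A := ⋂ i ∈ Finset.range n, X i ⁻¹' Set.Iic b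
  have hA : MeasurableSet A := MeasurableSet.biInter (Finset.range n).countable_toSet
    fun i _ => hmeas i measurableSet_Iic
  have hAc : μ.real Aᶜ = 1 - (1 - μ.real {ω | b < X 0 ω}) ^ n := by
    have hle : X 0 ⁻¹' Set.Iic b = {ω | b < X 0 ω}ᶜ := by ext; simp
    rw [probReal_compl_eq_one_sub hA, measureReal_def, measure_iInter_le_eq_pow hindep hident,
      ENNReal.toReal_pow, ← measureReal_def, hle,
      probReal_compl_eq_one_sub (measurableSet_lt measurable_const (hmeas 0))]
  have hsub : Aᶜ ⊆ {ω | b ≤ ⨆ i : Fin n, X i ω} := by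
    intro ω hω
    simp only [A, Set.mem_compl_iff, Set.mem_iInter, not_forall, Set.mem_preimage, Set.mem_Iic,
      not_le] at hω
    obtain ⟨i, hi, hbX⟩ := hω
    exact hbX.le.trans (le_ciSup (f := fun j : Fin n => X j ω) (Set.finite_range _).bddAbove
      ⟨i, Finset.mem_range.1 hi⟩)
  calc b * (1 - (1 - μ.real {ω | b < X 0 ω}) ^ n)
      ≤ b * μ.real {ω | b ≤ ⨆ i : Fin n, X i ω} := by
        rw [← hAc]; exact mul_le_mul_of_nonneg_left (measureReal_mono hsub) hb
    _ ≤ ∫ ω, ⨆ i : Fin n, X i ω ∂μ := mul_meas_ge_le_integral_of_nonneg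
        (ae_of_all _ fun ω => Real.iSup_nonneg fun i : Fin n => hnonneg i ω) hsup b

lemma eventually_integral_iSup_fin_div_log_lt [IsProbabilityMeasure μ]
    (hident : ∀ i, IdentDistrib (X i) (X 0) μ μ) (hint : Integrable (X 0) μ)
    (hsup : ∀ n, Integrable (fun ω => ⨆ i : Fin n, X i ω) μ) {C lam T : ℝ} (hlam : 0 < lam)
    (htail : ∀ x ≥ T, μ.real {ω | x < X 0 ω} ≤ C * Real.exp (-lam * x)) {K : ℝ} (hK : 1 < K) :
    ∀ᶠ n : ℕ in atTop, (∫ ω, ⨆ i : Fin n, X i ω ∂μ) / (Real.log n / lam) < K := by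
  obtain ⟨s, hs1, hsK⟩ := exists_between hK
  have hlog := Real.tendsto_log_atTop.comp tendsto_natCast_atTop_atTop
  have hlim : Tendsto (fun n : ℕ => s + C * (n : ℝ) ^ (1 - s) / Real.log n) atTop (𝓝 s) := by
    have hpow := (tendsto_rpow_neg_atTop (by linarith : 0 < s - 1)).comp
      tendsto_natCast_atTop_atTop
    simpa [neg_sub] using tendsto_const_nhds.add ((hpow.const_mul C).div_atTop hlog)
  filter_upwards [hlim.eventually (gt_mem_nhds hsK),
    ((hlog.const_mul_atTop (by linarith : 0 < s)).atTop_div_const hlam).eventually_ge_atTop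
      (max T 0), eventually_gt_atTop 1] with n hlt hbig hn
  have hlogpos : 0 < Real.log n := Real.log_pos (by exact_mod_cast hn)
  set a := s * Real.log n / lam
  have hpos : 0 < (n : ℝ) := by positivity
  rw [div_lt_iff₀ (by positivity)]
  calc ∫ ω, ⨆ i : Fin n, X i ω ∂μ
      ≤ a + n * ∫ ω, max (X 0 ω - a) 0 ∂μ :=
        integral_iSup_fin_le_add_mul hident hint (hsup n) (le_of_max_le_right hbig)
    _ ≤ a + n * (C / lam * Real.exp (-lam * a)) := by
        gcongr
        exact integral_max_sub_le_of_tail_le hint hlam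
          fun x hx => htail x ((le_of_max_le_left hbig).trans hx)
    _ = (s + C * (n : ℝ) ^ (1 - s) / Real.log n) * (Real.log n / lam) := by
        rw [← mul_exp_neg_mul_mul_log_div_eq_rpow hpos hlam.ne']
        simp only [a]
        field_simp
    _ < K * (Real.log n / lam) := by gcongr

lemma eventually_lt_integral_iSup_fin_div_log [IsProbabilityMeasure μ]
    (hmeas : ∀ i, Measurable (X i)) (hnonneg : ∀ i ω, 0 ≤ X i ω) (hindep : iIndepFun X μ)
    (hident : ∀ i, IdentDistrib (X i) (X 0) μ μ)
    (hsup : ∀ n, Integrable (fun ω => ⨆ i : Fin n, X i ω) μ) {c lam T : ℝ} (hc : 0 < c)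
    (hlam : 0 < lam) (htail : ∀ x ≥ T, c * Real.exp (-lam * x) ≤ μ.real {ω | x < X 0 ω})
    {K : ℝ} (hK : K < 1) :
    ∀ᶠ n : ℕ in atTop, K < (∫ ω, ⨆ i : Fin n, X i ω ∂μ) / (Real.log n / lam) := by
  obtain ⟨s, hKs, hs1, hs0⟩ : ∃ s, K < s ∧ s < 1 ∧ 0 < s := by
    obtain ⟨s, h1, h2⟩ := exists_between (max_lt hK one_pos)
    exact ⟨s, (le_max_left _ _).trans_lt h1, h2, (le_max_right _ _).trans_lt h1⟩
  have hlog := Real.tendsto_log_atTop.comp tendsto_natCast_atTop_atTop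
  have hlim : Tendsto (fun n : ℕ => s * (1 - Real.exp (-(c * (n : ℝ) ^ (1 - s))))) atTop
      (𝓝 s) := by
    have hpow := (tendsto_rpow_atTop (by linarith : 0 < 1 - s)).comp tendsto_natCast_atTop_atTop
    have hexp := Real.tendsto_exp_atBot.comp (tendsto_neg_atTop_atBot.comp
      (hpow.const_mul_atTop hc))
    simpa using ((tendsto_const_nhds (x := (1 : ℝ))).sub hexp).const_mul s
  filter_upwards [hlim.eventually (lt_mem_nhds hKs),
    ((hlog.const_mul_atTop hs0).atTop_div_const hlam).eventually_ge_atTop (max T 0),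
    eventually_gt_atTop 1] with n hlt hbig hn
  have hlogpos : 0 < Real.log n := Real.log_pos (by exact_mod_cast hn)
  set b := s * Real.log n / lam
  set G := μ.real {ω | b < X 0 ω}
  have hpow : (1 - G) ^ n ≤ Real.exp (-(c * (n : ℝ) ^ (1 - s))) := by
    calc (1 - G) ^ n ≤ Real.exp (-G) ^ n :=
          pow_le_pow_left₀ (sub_nonneg.2 measureReal_le_one) (Real.one_sub_le_exp_neg G) n
      _ = Real.exp (-(n * G)) := by rw [← Real.exp_nat_mul]; ring_nf
      _ ≤ Real.exp (-(c * (n : ℝ) ^ (1 - s))) := by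
        rw [Real.exp_le_exp, neg_le_neg_iff,
          ← mul_exp_neg_mul_mul_log_div_eq_rpow (by positivity) hlam.ne', mul_left_comm]
        exact mul_le_mul_of_nonneg_left (htail b (le_of_max_le_left hbig)) (by positivity)
  rw [lt_div_iff₀ (by positivity)]
  calc K * (Real.log n / lam)
      < s * (1 - Real.exp (-(c * (n : ℝ) ^ (1 - s)))) * (Real.log n / lam) := by gcongr
    _ = b * (1 - Real.exp (-(c * (n : ℝ) ^ (1 - s)))) := by simp only [b]; ring
    _ ≤ b * (1 - (1 - G) ^ n) := by gcongr
    _ ≤ ∫ ω, ⨆ i : Fin n, X i ω ∂μ :=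
        mul_one_sub_pow_le_integral_iSup_fin hmeas hnonneg hindep hident (hsup n)
          (le_of_max_le_right hbig)

end

/-- If `X` is a nonnegative random variable with finite mean whose
distribution has an exponential tail with parameters `(c, λ)`, and `X_{(n:n)}` denotes
the maximum of `n` i.i.d. copies of `X`, then `E[X_{(n:n)}] / (ln n / λ) → 1`. -/
theorem expected_maximum_exponential_tail
    {Ω : Type*} [MeasureSpace Ω] [IsProbabilityMeasure (ℙ : Measure Ω)]
    (c lam : ℝ) (hc : 0 < c) (hlam : 0 < lam)
    (X : ℕ → Ω → ℝ) (hmeas : ∀ i, Measurable (X i))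
    (hnonneg : ∀ i ω, 0 ≤ X i ω)
    (hint : Integrable (X 0) ℙ)
    (hindep : iIndepFun X ℙ)
    (hident : ∀ i, IdentDistrib (X i) (X 0) ℙ ℙ)
    (htail : Tendsto (fun x : ℝ => (ℙ {ω | X 0 ω > x}).toReal / (c * Real.exp (-lam * x)))
      atTop (𝓝 1)) :
    Tendsto (fun n : ℕ =>
        (∫ ω, ⨆ i : Fin n, X (i : ℕ) ω) / (Real.log n / lam))
      atTop (𝓝 1) := by
  have hsup := integrable_iSup_fin_of_nonneg hmeas hnonneg
    fun i => (hident i).integrable_iff.2 hint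
  obtain ⟨T, hT⟩ := eventually_atTop.1 <| eventually_half_le_and_le_two_mul_of_tendsto_div
    (.of_forall fun x => mul_pos hc (Real.exp_pos (-lam * x))) htail
  refine tendsto_order.2 ⟨fun K hK => ?_, fun K hK => ?_⟩
  · exact eventually_lt_integral_iSup_fin_div_log hmeas hnonneg hindep hident hsup
      (half_pos hc) hlam (fun x hx => (div_mul_eq_mul_div _ _ _).trans_le (hT x hx).1) hK
  · exact eventually_integral_iSup_fin_div_log_lt hident hint hsup hlam
      (fun x hx => (hT x hx).2.trans_eq (mul_assoc _ _ _).symm) hK
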